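/- arXiv:0807.2960 — 2 statements merged into one kernel-verified Lean document; each statement's English description precedes it below -/
import Mathlib

section
/- Let (w_n) be a positive sequence with (w_n) ∈ GS(w*) and w* > -1. Then lim_{n→∞} n w_n / (∑_{k=1}^n w_k) = 1 + w*. -/
/-!
With `F n = n w n` and `S n = ∑_{k ≤ n} w k`, the Stolz–Cesàro quotient
`(F (n+1) - F n) / w (n+1) = (n+1) (1 - w n / w (n+1)) + w n / w (n+1)` tends to `w* + 1`,
so `F n / S n` has the same limit once `S n → ∞`. Divergence comes from `w* > -1`: eventually
`(n+1) w n` increases, so `w n` dominates a multiple of the harmonic series.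
-/

open Filter Finset

def GS (γ : ℝ) (v : ℕ → ℝ) : Prop :=
  (∀ᶠ n in atTop, 0 < v n) ∧
  Tendsto (fun n : ℕ => (n : ℝ) * (1 - v (n - 1) / v n)) atTop (nhds γ)

open Topology Asymptotics

theorem tendsto_sum_range_div_sum_range_of_tendsto_div {f g : ℕ → ℝ} {l : ℝ} (hg : ∀ n, 0 < g n)
    (hg_sum : Tendsto (fun n => ∑ i ∈ range n, g i) atTop atTop)
    (h : Tendsto (fun n => f n / g n) atTop (𝓝 l)) :
    Tendsto (fun n => (∑ i ∈ range n, f i) / ∑ i ∈ range n, g i) atTop (𝓝 l) := by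
  have hlo : (fun n => f n - l * g n) =o[atTop] g := by
    refine (isLittleO_iff_tendsto fun n hn => absurd hn (hg n).ne').2 ?_
    refine (tendsto_sub_nhds_zero_iff.2 h).congr fun n => ?_
    field_simp [(hg n).ne']
  have hsum := (hlo.sum_range (fun n => (hg n).le) hg_sum).tendsto_div_nhds_zero
  refine tendsto_sub_nhds_zero_iff.1 (hsum.congr' ?_)
  filter_upwards [hg_sum.eventually_gt_atTop 0] with n hn
  rw [sum_sub_distrib, ← mul_sum]
  field_simp

namespace GS

variable {γ : ℝ} {v : ℕ → ℝ}

theorem tendsto_ratio (h : GS γ v) : Tendsto (fun n => v (n - 1) / v n) atTop (𝓝 1) := by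
  have h0 : Tendsto (fun n : ℕ => (n : ℝ)⁻¹ * ((n : ℝ) * (1 - v (n - 1) / v n))) atTop (𝓝 0) := by
    simpa using tendsto_inv_atTop_nhds_zero_nat.mul h.2
  have h1 := (tendsto_const_nhds (x := (1 : ℝ))).sub h0
  rw [sub_zero] at h1
  refine h1.congr' ?_
  filter_upwards [eventually_ne_atTop 0] with n hn
  field_simp
  ring

theorem eventually_mul_pred_lt_succ_mul (h : GS γ v) (hγ : -1 < γ) :
    ∀ᶠ n : ℕ in atTop, 0 < v n ∧ n * v (n - 1) < (n + 1) * v n := by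
  filter_upwards [h.1, h.2.eventually (lt_mem_nhds hγ)] with n hn hlt
  refine ⟨hn, ?_⟩
  rw [mul_sub, mul_one, mul_div_assoc', lt_sub_iff_add_lt, ← lt_sub_iff_add_lt',
    div_lt_iff₀ hn] at hlt
  linarith

theorem not_summable (h : GS γ v) (hγ : -1 < γ) : ¬ Summable v := by
  obtain ⟨N, hN⟩ := eventually_atTop.1 (h.eventually_mul_pred_lt_succ_mul hγ)
  have hmono : ∀ n, N ≤ n → (N + 1) * v N ≤ (n + 1) * v n := by
    intro n hn
    induction n, hn using Nat.le_induction with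
    | base => rfl
    | succ n hn ih =>
      have := (hN (n + 1) (by omega)).2
      push_cast at this ⊢
      linarith
  have hc : 0 < (N + 1) * v N := mul_pos (by positivity) (hN N le_rfl).1
  have hbound : ∀ᶠ n : ℕ in atTop, ‖(N + 1) * v N * (1 / ((n : ℝ) + 1))‖ ≤ v n := by
    filter_upwards [eventually_ge_atTop N] with n hn
    rw [Real.norm_of_nonneg (by positivity), mul_one_div, div_le_iff₀ (by positivity)]
    linarith [hmono n hn]
  intro hv
  have := (summable_mul_left_iff hc.ne').1 (hv.of_norm_bounded_eventually_nat hbound)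
  exact Real.not_summable_one_div_natCast ((summable_nat_add_iff 1).1 (by exact_mod_cast this))

end GS

theorem stmt_3 (w : ℕ → ℝ) (wstar : ℝ) (hpos : ∀ n, 1 ≤ n → 0 < w n)
    (hw : GS wstar w) (hwstar : -1 < wstar) :
    Tendsto (fun n : ℕ => (n : ℝ) * w n / ∑ k ∈ Icc 1 n, w k) atTop
      (nhds (1 + wstar)) := by
  have hpos' : ∀ i, 0 < w (i + 1) := fun i => hpos (i + 1) (by omega)
  have hdiv : Tendsto (fun n => ∑ i ∈ range n, w (i + 1)) atTop atTop :=
    (not_summable_iff_tendsto_nat_atTop_of_nonneg fun i => (hpos' i).le).1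
      fun hs => hw.not_summable hwstar ((summable_nat_add_iff 1).1 hs)
  have hquot : Tendsto (fun i : ℕ => (((i + 1 : ℕ) : ℝ) * w (i + 1) - i * w i) / w (i + 1))
      atTop (𝓝 (1 + wstar)) := by
    have h := (hw.2.comp (tendsto_add_atTop_nat 1)).add
      (hw.tendsto_ratio.comp (tendsto_add_atTop_nat 1))
    rw [add_comm 1 wstar]
    refine h.congr fun i => ?_
    simp only [Function.comp_apply, add_tsub_cancel_right]
    field_simp [(hpos' i).ne']
    push_cast
    ring
  refine (tendsto_sum_range_div_sum_range_of_tendsto_div hpos' hdiv hquot).congr fun n => ?_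
  rw [sum_range_sub (fun i => (i : ℝ) * w i), Nat.cast_zero, zero_mul, sub_zero, range_eq_Ico,
    sum_Ico_add', zero_add, Ico_add_one_right_eq_Icc]
end

section
/- Let (v_n) ∈ GS(v*), let (γ_n) ∈ GS(-α) be a positive sequence with γ_n → 0 and ∑ γ_n = ∞, with α ∈ (1/2, 1], and let m > 0 satisfy m - v* ξ > 0, where ξ = lim_{n→∞} (n γ_n)^{-1} (assumed to exist in [0,∞)). Set Π_n = ∏_{j=1}^n (1 - γ_j). Then lim_{n→∞} v_n Π_n^m ∑_{k=1}^n Π_k^{-m} γ_k / v_k = 1/(m - v* ξ). -/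
open Filter Finset

/-!
With `b n = (v n * Π n ^ m)⁻¹` and `a n` the partial sum, the quantity is `a n / b n`, and
`a (n+1) - a n = b (n+1) γ (n+1)`, `b (n+1) - b n = b (n+1) (1 - (v (n+1) / v n) (1 - γ (n+1)) ^ m)`.
Since `(1 - x) ^ m = 1 - m x + o(x)`, `v (n+1) / v n = 1 + v* / n + o(1 / n)` and
`1 / n = γ n (ξ + o(1))`, the last factor is `γ (n+1) (m - v* ξ + o(1))`. So `b` is eventually
increasing, it diverges because `∑ γ n = ∞`, and Stolz–Cesàro gives the limit `1 / (m - v* ξ)`.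
-/

open Topology Asymptotics
theorem tendsto_div_of_tendsto_sub_div_sub {a b : ℕ → ℝ} {L : ℝ} (hb : Tendsto b atTop atTop)
    (hmono : ∀ᶠ n in atTop, b n < b (n + 1))
    (h : Tendsto (fun n => (a (n + 1) - a n) / (b (n + 1) - b n)) atTop (𝓝 L)) :
    Tendsto (fun n => a n / b n) atTop (𝓝 L) := by
  obtain ⟨N, hN⟩ := eventually_atTop.1 hmono
  have hbN : Tendsto (fun n => b (n + N)) atTop atTop := (tendsto_add_atTop_iff_nat N).2 hb
  set d : ℕ → ℝ := fun k => b (k + N + 1) - b (k + N)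
  have hd : ∀ k, 0 < d k := fun k => sub_pos.2 (hN _ (by omega))
  have htel : ∀ (c : ℕ → ℝ) n, ∑ k ∈ range n, (c (k + N + 1) - c (k + N)) = c (n + N) - c N :=
    fun c n => by simpa [add_right_comm] using sum_range_sub (fun k => c (k + N)) n
  have hstep : (fun k => a (k + N + 1) - a (k + N) - L * d k) =o[atTop] d := by
    rw [isLittleO_iff_tendsto fun k hk => absurd hk (hd k).ne']
    refine (sub_self L ▸ ((tendsto_add_atTop_iff_nat N).2 h).sub_const L).congr fun k => ?_
    rw [sub_div _ (L * d k), mul_div_cancel_right₀ _ (hd k).ne']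
  have hsum := hstep.sum_range (fun k => (hd k).le) (by
    simp only [d, htel]
    simpa only [sub_eq_add_neg] using tendsto_atTop_add_const_right _ (-b N) hbN)
  simp only [sum_sub_distrib, ← mul_sum, d, htel] at hsum
  have hconst : ∀ c : ℝ, (fun _ : ℕ => c) =o[atTop] fun n => b (n + N) := fun c =>
    isLittleO_const_left.2 (Or.inr (tendsto_norm_atTop_atTop.comp hbN))
  have hequiv : (fun n => b (n + N) - b N) ~[atTop] fun n => b (n + N) := by
    simpa [IsEquivalent, Pi.sub_def] using hconst (-b N)
  have hmain : (fun n => a (n + N) - L * b (n + N)) =o[atTop] fun n => b (n + N) :=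
    ((hsum.trans_isBigO hequiv.isBigO).add (hconst (a N - L * b N))).congr_left fun n => by ring
  rw [← tendsto_add_atTop_iff_nat N]
  refine (zero_add L ▸ hmain.tendsto_div_nhds_zero.add_const L).congr' ?_
  filter_upwards [hbN.eventually_ne_atTop 0] with n hn
  rw [sub_div, mul_div_cancel_right₀ _ hn, sub_add_cancel]

theorem tendsto_atTop_of_mul_le_sub {b g : ℕ → ℝ} {c : ℝ} (hc : 0 < c)
    (hg : Tendsto (fun n => ∑ k ∈ range n, g k) atTop atTop)
    (hb : ∀ᶠ n in atTop, c * g n ≤ b (n + 1) - b n) : Tendsto b atTop atTop := by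
  obtain ⟨N, hN⟩ := eventually_atTop.1 hb
  have hlow : ∀ n, N ≤ n → b N + c * (∑ k ∈ range n, g k - ∑ k ∈ range N, g k) ≤ b n := by
    intro n hn
    induction n, hn using Nat.le_induction with
    | base => simp
    | succ n hn ih => rw [sum_range_succ]; linarith [hN n hn]
  refine tendsto_atTop_mono' _ (eventually_atTop.2 ⟨N, hlow⟩) ?_
  exact tendsto_atTop_add_const_left _ _
    ((tendsto_atTop_add_const_right _ _ hg).const_mul_atTop hc)

theorem tendsto_div_of_sub_eq_mul {a b e g : ℕ → ℝ} {L : ℝ} (hL : 0 < L) (hg : ∀ n, 0 < g n)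
    (hdiv : Tendsto (fun n => ∑ k ∈ range n, g k) atTop atTop) (hb : ∀ᶠ n in atTop, 0 < b n)
    (ha : ∀ n, a (n + 1) - a n = b (n + 1) * g n)
    (hbe : ∀ᶠ n in atTop, b (n + 1) - b n = b (n + 1) * e n)
    (he : Tendsto (fun n => e n / g n) atTop (𝓝 L)) :
    Tendsto (fun n => a n / b n) atTop (𝓝 L⁻¹) := by
  have he_low : ∀ᶠ n in atTop, L / 2 * g n < e n := by
    filter_upwards [he.eventually (eventually_gt_nhds (half_lt_self hL))] with n hn
    exact (lt_div_iff₀ (hg n)).1 hn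
  have hb_succ : ∀ᶠ n in atTop, 0 < b (n + 1) := (tendsto_add_atTop_nat 1).eventually hb
  have hmono : ∀ᶠ n in atTop, b n < b (n + 1) := by
    filter_upwards [hbe, he_low, hb_succ] with n hbe_n he_n hb_n
    have : 0 < e n := (mul_pos (half_pos hL) (hg n)).trans he_n
    linarith [mul_pos hb_n this]
  obtain ⟨N, hN⟩ := eventually_atTop.1 (hb.and hmono)
  have hbN : ∀ n, N ≤ n → b N ≤ b n := fun n hn => by
    induction n, hn using Nat.le_induction with
    | base => exact le_rfl
    | succ n hn ih => exact ih.trans (hN n hn).2.le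
  have htop : Tendsto b atTop atTop := by
    refine tendsto_atTop_of_mul_le_sub (mul_pos (half_pos hL) (hN N le_rfl).1) hdiv ?_
    filter_upwards [hbe, he_low, eventually_ge_atTop N] with n hbe_n he_n hn
    calc L / 2 * b N * g n = b N * (L / 2 * g n) := by ring
      _ ≤ b (n + 1) * e n := mul_le_mul (hbN (n + 1) (by omega)) he_n.le
          (mul_pos (half_pos hL) (hg n)).le (hN (n + 1) (by omega)).1.le
      _ = b (n + 1) - b n := hbe_n.symm
  refine tendsto_div_of_tendsto_sub_div_sub htop hmono ((he.inv₀ hL.ne').congr' ?_)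
  filter_upwards [hbe, hb_succ] with n hbe_n hb_n
  rw [ha, hbe_n, mul_div_mul_left _ _ hb_n.ne', inv_div]

theorem tendsto_one_sub_one_sub_rpow_div (m : ℝ) :
    Tendsto (fun x : ℝ => (1 - (1 - x) ^ m) / x) (𝓝[≠] 0) (𝓝 m) := by
  have hderiv : HasDerivAt (fun x : ℝ => (1 - x) ^ m) (-m) 0 := by
    simpa using ((hasDerivAt_id (0 : ℝ)).const_sub 1).rpow_const (p := m) (Or.inl (by norm_num))
  refine (neg_neg m ▸ (hasDerivAt_iff_tendsto_slope.1 hderiv).neg).congr fun x => ?_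
  simp [slope_def_field, ← neg_div]

theorem GS.tendsto_succ_mul_one_sub_div {c : ℝ} {v : ℕ → ℝ} (hv : GS c v) :
    Tendsto (fun n : ℕ => ((n : ℝ) + 1) * (1 - v (n + 1) / v n)) atTop (𝓝 (-c)) := by
  have hshift : Tendsto (fun n : ℕ => ((n : ℝ) + 1) * (1 - v n / v (n + 1))) atTop (𝓝 c) := by
    simpa using (tendsto_add_atTop_iff_nat 1).2 hv.2
  have hratio : Tendsto (fun n : ℕ => v n / v (n + 1)) atTop (𝓝 1) := by
    have := (hshift.mul tendsto_one_div_add_atTop_nhds_zero_nat).const_sub 1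
    rw [mul_zero, sub_zero] at this
    refine this.congr fun n => ?_
    field_simp
    ring
  refine (div_one (-c) ▸ hshift.neg.div hratio one_ne_zero).congr' ?_
  filter_upwards [hratio.eventually_ne one_ne_zero] with n hn
  obtain ⟨hvn, hvn'⟩ := div_ne_zero_iff.1 hn
  simp only [Pi.div_apply]
  field_simp
  ring

theorem GS.tendsto_one_sub_div_mul_rpow_div {c ξ m : ℝ} {v g : ℕ → ℝ} (hv : GS c v)
    (hg : ∀ n, g n ≠ 0) (hg0 : Tendsto g atTop (𝓝 0))
    (hξ : Tendsto (fun n : ℕ => (((n : ℝ) + 1) * g n)⁻¹) atTop (𝓝 ξ)) :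
    Tendsto (fun n => (1 - v (n + 1) / v n * (1 - g n) ^ m) / g n) atTop (𝓝 (m - c * ξ)) := by
  have hg' : Tendsto g atTop (𝓝[≠] 0) :=
    tendsto_nhdsWithin_of_tendsto_nhds_of_eventually_within _ hg0 (Eventually.of_forall hg)
  have hpow : Tendsto (fun n => (1 - g n) ^ m) atTop (𝓝 1) := by
    have : ContinuousAt (fun x : ℝ => (1 - x) ^ m) 0 :=
      (continuous_const.sub continuous_id).continuousAt.rpow_const (Or.inl (by norm_num))
    simpa [Function.comp_def] using this.tendsto.comp hg0
  have := ((tendsto_one_sub_one_sub_rpow_div m).comp hg').add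
    (hpow.mul (hv.tendsto_succ_mul_one_sub_div.mul hξ))
  rw [one_mul, neg_mul, ← sub_eq_add_neg] at this
  refine this.congr fun n => ?_
  have := hg n
  simp only [Function.comp_apply]
  field_simp
  ring

theorem stmt_4_general (v γ : ℕ → ℝ) (vstar ξ m : ℝ)
    (hv : GS vstar v)
    (hγ01 : ∀ n, 1 ≤ n → γ n ∈ Set.Ioo (0 : ℝ) 1)
    (hγ0 : Tendsto γ atTop (nhds 0))
    (hdiv : Tendsto (fun n => ∑ k ∈ Icc 1 n, γ k) atTop atTop)
    (hξlim : Tendsto (fun n : ℕ => ((n : ℝ) * γ n)⁻¹) atTop (nhds ξ))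
    (hmξ : 0 < m - vstar * ξ) :
    Tendsto
      (fun n : ℕ =>
        v n * (∏ j ∈ Icc 1 n, (1 - γ j)) ^ m *
          ∑ k ∈ Icc 1 n, ((∏ j ∈ Icc 1 k, (1 - γ j)) ^ m)⁻¹ * γ k / v k)
      atTop (nhds (1 / (m - vstar * ξ))) := by
  have hγ : ∀ n, 0 < γ (n + 1) ∧ 0 < 1 - γ (n + 1) := fun n =>
    ⟨(hγ01 (n + 1) (by omega)).1, sub_pos.2 (hγ01 (n + 1) (by omega)).2⟩
  have hprod_pos : ∀ n, 0 < ∏ j ∈ Icc 1 n, (1 - γ j) := fun n =>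
    prod_pos fun j hj => sub_pos.2 (hγ01 j (mem_Icc.1 hj).1).2
  set P : ℕ → ℝ := fun n => (∏ j ∈ Icc 1 n, (1 - γ j)) ^ m
  have hP_pos : ∀ n, 0 < P n := fun n => Real.rpow_pos_of_pos (hprod_pos n) m
  have hP_succ : ∀ n, P (n + 1) = P n * (1 - γ (n + 1)) ^ m := fun n => by
    simp only [P]
    rw [prod_Icc_succ_top (by omega), Real.mul_rpow (hprod_pos n).le (hγ n).2.le]
  have hsum_shift : ∀ n, ∑ k ∈ range n, γ (k + 1) = ∑ k ∈ Icc 1 n, γ k := fun n => by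
    rw [range_eq_Ico, sum_Ico_add', zero_add, Ico_add_one_right_eq_Icc]
  have hrel_step := hv.tendsto_one_sub_div_mul_rpow_div (m := m) (fun n => (hγ n).1.ne')
    ((tendsto_add_atTop_iff_nat 1).2 hγ0) (by simpa using (tendsto_add_atTop_iff_nat 1).2 hξlim)
  have hb_step : ∀ᶠ n in atTop, (v (n + 1) * P (n + 1))⁻¹ - (v n * P n)⁻¹ =
      (v (n + 1) * P (n + 1))⁻¹ * (1 - v (n + 1) / v n * (1 - γ (n + 1)) ^ m) := by
    filter_upwards [hv.1, (tendsto_add_atTop_nat 1).eventually hv.1] with n hvn hvn'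
    have := (hP_pos n).ne'
    have := (Real.rpow_pos_of_pos (hγ n).2 m).ne'
    rw [hP_succ]
    field_simp [hvn.ne', hvn'.ne']
  have hlim := tendsto_div_of_sub_eq_mul (a := fun n => ∑ k ∈ Icc 1 n, (P k)⁻¹ * γ k / v k)
    (b := fun n => (v n * P n)⁻¹) hmξ (fun n => (hγ n).1) (by simpa only [hsum_shift] using hdiv)
    (hv.1.mono fun n hn => inv_pos.2 (mul_pos hn (hP_pos n)))
    (fun n => by rw [sum_Icc_succ_top (by omega), mul_inv]; ring) hb_step hrel_step
  rw [one_div]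
  exact hlim.congr fun n => by rw [div_inv_eq_mul, mul_comm]

theorem stmt_4 (v γ : ℕ → ℝ) (vstar α ξ m : ℝ)
    (hv : GS vstar v) (hγ : GS (-α) γ) (hα : 1/2 < α ∧ α ≤ 1)
    (hγ01 : ∀ n, 1 ≤ n → γ n ∈ Set.Ioo (0 : ℝ) 1)
    (hγ0 : Tendsto γ atTop (nhds 0))
    (hdiv : Tendsto (fun n => ∑ k ∈ Icc 1 n, γ k) atTop atTop)
    (hξ : 0 ≤ ξ)
    (hξlim : Tendsto (fun n : ℕ => ((n : ℝ) * γ n)⁻¹) atTop (nhds ξ))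
    (hm : 0 < m) (hmξ : 0 < m - vstar * ξ) :
    Tendsto
      (fun n : ℕ =>
        v n * (∏ j ∈ Icc 1 n, (1 - γ j)) ^ m *
          ∑ k ∈ Icc 1 n, ((∏ j ∈ Icc 1 k, (1 - γ j)) ^ m)⁻¹ * γ k / v k)
      atTop (nhds (1 / (m - vstar * ξ))) :=
  stmt_4_general v γ vstar ξ m hv hγ01 hγ0 hdiv hξlim hmξ
end
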